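/- For every integer k ≥ 1 and every integer n ≥ k+1, the k-th powers of the Fibonacci polynomials satisfy the recurrence ∑_{j=0}^{k+1} (−1)^{binom(j+1,2)} · s^{binom(j,2)} · ⟨k+1, j⟩(x,s) · F_{n−j}(x,s)^k = 0 in the field ℚ(x,s). -/

import Mathlib

open Finset

/-- The Fibonacci polynomials `F n` in two variables `x = X 0`, `s = X 1`, defined by
`F 0 = 0`, `F 1 = 1`, `F (n+2) = x * F (n+1) + s * F n`. -/
noncomputable def fibPoly : ℕ → MvPolynomial (Fin 2) ℚ
  | 0 => 0
  | 1 => 1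
  | n + 2 => MvPolynomial.X 0 * fibPoly (n + 1) + MvPolynomial.X 1 * fibPoly n

/-- The field ℚ(x,s) of rational functions in two variables over ℚ. -/
noncomputable abbrev RatField : Type := FractionRing (MvPolynomial (Fin 2) ℚ)

/-- The Fibonacci polynomials viewed in ℚ(x,s). -/
noncomputable def fibF (n : ℕ) : RatField :=
  algebraMap (MvPolynomial (Fin 2) ℚ) RatField (fibPoly n)

/-- The variable `s` viewed in ℚ(x,s). -/
noncomputable def sVar : RatField :=
  algebraMap (MvPolynomial (Fin 2) ℚ) RatField (MvPolynomial.X 1)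

/-- The fibonomial coefficient `⟨n, k⟩(x,s) = (∏_{i=0}^{k-1} F_{n-i}) / (∏_{i=1}^{k} F_i)`. -/
noncomputable def fibonomial (n k : ℕ) : RatField :=
  (∏ i ∈ Finset.range k, fibF (n - i)) / (∏ i ∈ Finset.range k, fibF (i + 1))
/-!
Over a field containing the roots `a ≠ b` of `T² = x T + s` (distinct since `x² + 4s ≠ 0`),
Binet's formula `(a - b) F_m = a^m - b^m` makes `(a - b)^k F_N^k` a linear combination of the
geometric sequences `(a^i b^(k-i))^N`, `i ≤ k`. The Pascal rule for fibonomials,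
`⟨m+1, j+1⟩ = b^(j+1) ⟨m, j+1⟩ + a^(m-j) ⟨m, j⟩`, gives the fibonomial binomial theorem
`∑_j (-1)^C(j+1,2) s^C(j,2) ⟨k+1, j⟩ T^(k+1-j) = ∏_{i ≤ k} (T - a^i b^(k-i))`, so each of
these geometric sequences, and hence `F_N^k`, satisfies the recurrence.
-/

noncomputable def xVar : RatField :=
  algebraMap (MvPolynomial (Fin 2) ℚ) RatField (MvPolynomial.X 0)

theorem fibF_zero : fibF 0 = 0 := by simp [fibF, fibPoly]

theorem fibF_one : fibF 1 = 1 := by simp [fibF, fibPoly]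

theorem fibF_add_two (n : ℕ) : fibF (n + 2) = xVar * fibF (n + 1) + sVar * fibF n := by
  simp [fibF, fibPoly, xVar, sVar]

theorem eval_one_fibPoly (n : ℕ) :
    MvPolynomial.eval (fun _ ↦ (1 : ℚ)) (fibPoly n) = Nat.fib n := by
  induction n using Nat.twoStepInduction with
  | zero => simp [fibPoly]
  | one => simp [fibPoly]
  | more n ih₁ ih₂ =>
    simp only [fibPoly, map_add, map_mul, MvPolynomial.eval_X, ih₁, ih₂, Nat.fib_add_two]
    push_cast
    ring

theorem fibF_ne_zero {n : ℕ} (hn : n ≠ 0) : fibF n ≠ 0 := by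
  rw [fibF, ne_eq, IsFractionRing.to_map_eq_zero_iff]
  intro h
  have := eval_one_fibPoly n
  rw [h, map_zero, eq_comm, Nat.cast_eq_zero, Nat.fib_eq_zero] at this
  exact hn this

theorem xVar_sq_add_four_mul_sVar_ne_zero : xVar ^ 2 + 4 * sVar ≠ 0 := by
  have : xVar ^ 2 + 4 * sVar = algebraMap (MvPolynomial (Fin 2) ℚ) RatField
      (MvPolynomial.X 0 ^ 2 + 4 * MvPolynomial.X 1) := by
    simp [xVar, sVar, map_ofNat]
  rw [this, ne_eq, IsFractionRing.to_map_eq_zero_iff]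
  intro h
  simpa using congrArg (MvPolynomial.eval ![0, 1]) h

theorem prod_fibF_succ_ne_zero (j : ℕ) : ∏ i ∈ range j, fibF (i + 1) ≠ 0 :=
  prod_ne_zero_iff.mpr fun _ _ ↦ fibF_ne_zero (Nat.succ_ne_zero _)

theorem fibonomial_zero_right (m : ℕ) : fibonomial m 0 = 1 := by simp [fibonomial]

theorem fibonomial_eq_zero_of_lt {m j : ℕ} (h : m < j) : fibonomial m j = 0 := by
  rw [fibonomial, prod_eq_zero (mem_range.mpr h) (by simp [fibF_zero]), zero_div]

theorem fibonomial_succ_right_mul (m j : ℕ) :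
    fibonomial m (j + 1) * fibF (j + 1) = fibonomial m j * fibF (m - j) := by
  have := prod_fibF_succ_ne_zero j
  have := fibF_ne_zero (Nat.succ_ne_zero j)
  simp only [fibonomial, prod_range_succ]
  field_simp

theorem fibonomial_succ_succ_mul (m j : ℕ) :
    fibonomial (m + 1) (j + 1) * fibF (j + 1) = fibF (m + 1) * fibonomial m j := by
  have := prod_fibF_succ_ne_zero j
  have := fibF_ne_zero (Nat.succ_ne_zero j)
  simp only [fibonomial, prod_range_succ', prod_range_succ (fun i ↦ fibF (i + 1)),
    Nat.add_sub_add_right, Nat.sub_zero]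
  field_simp

section Homogeneous

variable {R : Type*} [CommRing R]

theorem sum_homogeneous_eq_sub_mul (f g : ℕ → R) (k : ℕ) (α T U : R) (h₀ : g 0 = f 0)
    (hsucc : ∀ j ≤ k, g (j + 1) = f (j + 1) - α * f j) (hf : f (k + 1) = 0) :
    ∑ j ∈ range (k + 2), g j * U ^ j * T ^ (k + 1 - j) =
      (T - α * U) * ∑ j ∈ range (k + 1), f j * U ^ j * T ^ (k - j) := by
  have hg : ∑ j ∈ range (k + 2), g j * U ^ j * T ^ (k + 1 - j) =
      ∑ j ∈ range (k + 2), f j * U ^ j * T ^ (k + 1 - j) -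
        α * U * ∑ j ∈ range (k + 1), f j * U ^ j * T ^ (k - j) := by
    rw [sum_range_succ', sum_range_succ' _ (k + 1), h₀, mul_sum, add_sub_right_comm,
      ← sum_sub_distrib]
    congr 1
    refine sum_congr rfl fun j hj ↦ ?_
    rw [hsucc j (by simpa [Nat.lt_succ_iff] using hj)]
    simp only [Nat.add_sub_add_right]
    ring
  have hf' : ∑ j ∈ range (k + 2), f j * U ^ j * T ^ (k + 1 - j) =
      T * ∑ j ∈ range (k + 1), f j * U ^ j * T ^ (k - j) := by
    rw [sum_range_succ, hf, zero_mul, zero_mul, add_zero, mul_sum]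
    refine sum_congr rfl fun j hj ↦ ?_
    rw [Nat.sub_add_comm (by simpa [Nat.lt_succ_iff] using hj), pow_succ]
    ring
  rw [hg, hf', sub_mul]

theorem sum_mul_pow_sub_eq_zero {c : ℕ → R} {d n : ℕ} (hn : d ≤ n) {r : R}
    (hr : ∑ j ∈ range (d + 1), c j * r ^ (d - j) = 0) :
    ∑ j ∈ range (d + 1), c j * r ^ (n - j) = 0 := by
  calc ∑ j ∈ range (d + 1), c j * r ^ (n - j)
      = r ^ (n - d) * ∑ j ∈ range (d + 1), c j * r ^ (d - j) := by
        rw [mul_sum]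
        refine sum_congr rfl fun j hj ↦ ?_
        rw [mul_left_comm, ← pow_add]
        congr 2
        have := mem_range.mp hj
        omega
    _ = 0 := by rw [hr, mul_zero]

end Homogeneous

noncomputable def signedFibonomial (m j : ℕ) : RatField :=
  (-1) ^ ((j + 1).choose 2) * sVar ^ (j.choose 2) * fibonomial m j

theorem choose_two_succ (j : ℕ) : (j + 1).choose 2 = j.choose 2 + j := by
  rw [Nat.choose_succ_succ', Nat.choose_one_right, add_comm]

section Roots

variable {L : Type*} [Field L] (φ : RatField →+* L) {a b : L}

theorem sub_mul_map_fibF (hx : a + b = φ xVar) (hs : a * b = -φ sVar) (m : ℕ) :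
    (a - b) * φ (fibF m) = a ^ m - b ^ m := by
  induction m using Nat.twoStepInduction with
  | zero => simp [fibF_zero]
  | one => simp [fibF_one]
  | more m ih₁ ih₂ =>
    rw [fibF_add_two, map_add, map_mul, map_mul, ← hx, neg_eq_iff_eq_neg.mp hs.symm]
    linear_combination (a + b) * ih₂ - a * b * ih₁

theorem map_fibF_add_add_one (hx : a + b = φ xVar) (hs : a * b = -φ sVar) (hab : a ≠ b)
    (i j : ℕ) :
    φ (fibF (i + j + 1)) = b ^ (j + 1) * φ (fibF i) + a ^ i * φ (fibF (j + 1)) := by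
  refine mul_left_cancel₀ (sub_ne_zero.mpr hab) ?_
  rw [mul_add, mul_left_comm, mul_left_comm _ (a ^ i)]
  simp only [sub_mul_map_fibF φ hx hs]
  ring

theorem map_fibonomial_add_add_one (hx : a + b = φ xVar) (hs : a * b = -φ sVar) (hab : a ≠ b)
    (i j : ℕ) : φ (fibonomial (i + j + 1) (j + 1)) =
      b ^ (j + 1) * φ (fibonomial (i + j) (j + 1)) + a ^ i * φ (fibonomial (i + j) j) := by
  have h₁ := congrArg φ (fibonomial_succ_right_mul (i + j) j)
  have h₂ := congrArg φ (fibonomial_succ_succ_mul (i + j) j)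
  rw [Nat.add_sub_cancel] at h₁
  simp only [map_mul, map_fibF_add_add_one φ hx hs hab] at h₁ h₂
  refine mul_right_cancel₀ ((map_ne_zero φ).mpr (fibF_ne_zero (Nat.succ_ne_zero j))) ?_
  linear_combination h₂ - b ^ (j + 1) * h₁

theorem map_signedFibonomial_add_add_one (hx : a + b = φ xVar) (hs : a * b = -φ sVar)
    (hab : a ≠ b) (i j : ℕ) : φ (signedFibonomial (i + j + 1) (j + 1)) =
      b ^ (j + 1) * φ (signedFibonomial (i + j) (j + 1)) -
        a ^ (i + j) * b ^ j * φ (signedFibonomial (i + j) j) := by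
  have hsign : (-1 : RatField) ^ ((j + 1 + 1).choose 2) * sVar ^ ((j + 1).choose 2) =
      -((-1) ^ ((j + 1).choose 2) * sVar ^ (j.choose 2)) * (-sVar) ^ j := by
    rw [choose_two_succ (j + 1), choose_two_succ j, neg_pow sVar]
    ring
  have hpascal := map_fibonomial_add_add_one φ hx hs hab i j
  simp only [signedFibonomial, map_mul, hsign, hpascal, map_neg, map_pow, ← hs]
  ring

theorem sum_map_signedFibonomial_eq_prod (hx : a + b = φ xVar) (hs : a * b = -φ sVar)
    (hab : a ≠ b) (k : ℕ) (T U : L) :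
    ∑ j ∈ range (k + 1), φ (signedFibonomial k j) * U ^ j * T ^ (k - j) =
      ∏ m ∈ range k, (T - a ^ (k - 1 - m) * b ^ m * U) := by
  induction k generalizing U with
  | zero => simp [signedFibonomial, fibonomial_zero_right]
  | succ k ih =>
    -- by the Pascal rule, the form of level `k + 1` at `(T, U)` is `(T - a^k U)` times the
    -- form of level `k` at `(T, b U)`
    rw [sum_homogeneous_eq_sub_mul (fun j ↦ φ (signedFibonomial k j) * b ^ j) _ k (a ^ k)]
    · have hscaled :
          ∑ j ∈ range (k + 1), φ (signedFibonomial k j) * b ^ j * U ^ j * T ^ (k - j) =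
          ∏ m ∈ range k, (T - a ^ (k - 1 - m) * b ^ m * (b * U)) := by
        rw [← ih]
        exact sum_congr rfl fun j _ ↦ by ring
      rw [hscaled, prod_range_succ', mul_comm]
      congr 1
      · refine prod_congr rfl fun m _ ↦ ?_
        rw [show k + 1 - 1 - (m + 1) = k - 1 - m by omega]
        ring
      · simp
    · simp [signedFibonomial, fibonomial_zero_right]
    · intro j hj
      obtain ⟨i, rfl⟩ := Nat.exists_eq_add_of_le' hj
      rw [map_signedFibonomial_add_add_one φ hx hs hab]
      ring
    · simp [signedFibonomial, fibonomial_eq_zero_of_lt (Nat.lt_succ_self k)]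

theorem sum_map_signedFibonomial_mul_pow_eq_zero (hx : a + b = φ xVar) (hs : a * b = -φ sVar)
    (hab : a ≠ b) {k i n : ℕ} (hi : i ≤ k) (hn : k + 1 ≤ n) :
    ∑ j ∈ range (k + 2),
      φ (signedFibonomial (k + 1) j) * (a ^ i * b ^ (k - i)) ^ (n - j) = 0 := by
  refine sum_mul_pow_sub_eq_zero hn ?_
  have hprod := sum_map_signedFibonomial_eq_prod φ hx hs hab (k + 1) (a ^ i * b ^ (k - i)) 1
  simp only [one_pow, mul_one] at hprod
  rw [hprod]
  refine prod_eq_zero (i := k - i) (mem_range.mpr (by omega)) ?_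
  rw [show k + 1 - 1 - (k - i) = i by omega, sub_self]

theorem sub_mul_map_fibF_pow (hx : a + b = φ xVar) (hs : a * b = -φ sVar) (k N : ℕ) :
    ((a - b) * φ (fibF N)) ^ k =
      ∑ i ∈ range (k + 1), (-1) ^ (i + k) * (k.choose i : L) * (a ^ i * b ^ (k - i)) ^ N := by
  rw [sub_mul_map_fibF φ hx hs, sub_pow]
  refine sum_congr rfl fun i _ ↦ ?_
  rw [mul_pow, ← pow_mul, ← pow_mul, ← pow_mul, ← pow_mul, mul_comm N, mul_comm N]
  ring

end Roots

theorem exists_roots : ∃ a b : AlgebraicClosure RatField,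
    a + b = algebraMap _ _ xVar ∧ a * b = -algebraMap _ _ sVar ∧ a ≠ b := by
  set φ := algebraMap RatField (AlgebraicClosure RatField)
  obtain ⟨δ, hδ⟩ := IsAlgClosed.exists_eq_mul_self (φ (xVar ^ 2 + 4 * sVar))
  have hδ₀ : δ ≠ 0 := by
    rintro rfl
    exact xVar_sq_add_four_mul_sVar_ne_zero ((map_eq_zero φ).mp (by simpa using hδ))
  refine ⟨(φ xVar + δ) / 2, (φ xVar - δ) / 2, by ring, ?_, ?_⟩
  · rw [map_add, map_mul, map_pow, map_ofNat] at hδ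
    linear_combination (1 / 4 : AlgebraicClosure RatField) * hδ
  · intro h
    exact hδ₀ (by linear_combination h)

theorem fibPoly_pow_recurrence_general (k n : ℕ) (hn : k + 1 ≤ n) :
    ∑ j ∈ Finset.range (k + 2),
      (-1 : RatField) ^ ((j + 1).choose 2) * sVar ^ (j.choose 2) *
        fibonomial (k + 1) j * fibF (n - j) ^ k = 0 := by
  obtain ⟨a, b, hx, hs, hab⟩ := exists_roots
  set φ := algebraMap RatField (AlgebraicClosure RatField)
  change ∑ j ∈ range (k + 2), signedFibonomial (k + 1) j * fibF (n - j) ^ k = 0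
  refine (map_eq_zero φ).mp (mul_left_cancel₀ (pow_ne_zero k (sub_ne_zero.mpr hab)) ?_)
  calc (a - b) ^ k * φ (∑ j ∈ range (k + 2), signedFibonomial (k + 1) j * fibF (n - j) ^ k)
      = ∑ j ∈ range (k + 2),
          φ (signedFibonomial (k + 1) j) * ((a - b) * φ (fibF (n - j))) ^ k := by
        simp only [map_sum, mul_sum, map_mul, map_pow]
        exact sum_congr rfl fun j _ ↦ by rw [mul_pow]; ring
    _ = ∑ i ∈ range (k + 1), (-1) ^ (i + k) * (k.choose i : AlgebraicClosure RatField) *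
          ∑ j ∈ range (k + 2),
            φ (signedFibonomial (k + 1) j) * (a ^ i * b ^ (k - i)) ^ (n - j) := by
        simp only [sub_mul_map_fibF_pow φ hx hs, mul_sum]
        rw [sum_comm]
        exact sum_congr rfl fun j _ ↦ sum_congr rfl fun i _ ↦ by ring
    _ = (a - b) ^ k * 0 := by
        rw [mul_zero]
        refine sum_eq_zero fun i hi ↦ ?_
        rw [sum_map_signedFibonomial_mul_pow_eq_zero φ hx hs hab (Nat.lt_succ_iff.mp
          (mem_range.mp hi)) hn, mul_zero]

theorem fibPoly_pow_recurrence (k n : ℕ) (hk : 1 ≤ k) (hn : k + 1 ≤ n) :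
    ∑ j ∈ Finset.range (k + 2),
      (-1 : RatField) ^ ((j + 1).choose 2) * sVar ^ (j.choose 2) *
        fibonomial (k + 1) j * fibF (n - j) ^ k = 0 :=
  fibPoly_pow_recurrence_general k n hn
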